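/- Let Cat₀ = {x ∈ ℝ³ : cosh²(x₃) = x₁² + x₂², |x₃| < t₀} where cosh(t₀) = t₀·sinh(t₀), and let N_{θ₀} = {x ∈ ℝ³ : x₃² < |x|²·sin²θ₀} ∖ {0} be the open solid double cone with sin²θ₀ = t₀²/(t₀² + cosh²t₀). Then the dilations {λ·Cat₀ : λ > 0} are pairwise disjoint and their union equals N_{θ₀}. Consequently, there is a well-defined function f : N_{θ₀} → (0,∞) such that x/f(x) ∈ Cat₀ for all x ∈ N_{θ₀}, and f(λx) = λ·f(x) for all λ > 0. -/

import Mathlib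

open Real Set Pointwise

abbrev R3 := EuclideanSpace ℝ (Fin 3)

/-- The middle portion `Cat₀` of the standard vertical catenoid: the points with
`|x₃| < t₀`. -/
def Cat0 (t₀ : ℝ) : Set R3 :=
  {x | Real.cosh (x 2) ^ 2 = x 0 ^ 2 + x 1 ^ 2 ∧ |x 2| < t₀}

/-- The open solid double cone `N_{θ₀}` (with the origin removed), where
`sin²θ₀ = t₀²/(t₀² + cosh²t₀)`. -/
def solidCone (t₀ : ℝ) : Set R3 :=
  {x | x ≠ 0 ∧ (x 2) ^ 2 < ‖x‖ ^ 2 * (t₀ ^ 2 / (t₀ ^ 2 + Real.cosh t₀ ^ 2))}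

/-!
For `l > 0`, `x ∈ l • Cat₀` means `l cosh (x₃ / l) = ρ` and `|x₃| < l t₀`, where `ρ = √(x₁² + x₂²)`.
For fixed `z = x₃`, the derivative of `l ↦ l cosh (z / l)` is `cosh s - s sinh s` with `s = z / l`,
which is positive for `|s| < t₀` because the tangent line of `cosh` at `t₀` passes through the
origin. Hence on `l > |z| / t₀` this function increases strictly from `|z| cosh t₀ / t₀` to `∞`, so
the equation `l cosh (z / l) = ρ` has at most one admissible solution, and it has one exactly
when `|z| cosh t₀ < ρ t₀`, which is the cone condition.
-/

lemma cosh_add_sinh_mul_sub_lt_cosh {s t : ℝ} (hst : s < t) :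
    cosh t + sinh t * (s - t) < cosh s := by
  obtain ⟨c, hc, hslope⟩ := exists_hasDerivAt_eq_slope cosh sinh hst
    continuous_cosh.continuousOn (fun x _ => hasDerivAt_cosh x)
  have hsinh : sinh c < sinh t := sinh_lt_sinh.2 hc.2
  rw [hslope, div_lt_iff₀ (sub_pos.2 hst)] at hsinh
  nlinarith

lemma mul_sinh_lt_cosh_of_lt {t₀ s : ℝ} (heq : cosh t₀ = t₀ * sinh t₀) (hs : s < t₀) :
    s * sinh t₀ < cosh s := by
  have := cosh_add_sinh_mul_sub_lt_cosh hs
  nlinarith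

lemma mul_sinh_lt_cosh_of_abs_lt {t₀ s : ℝ} (heq : cosh t₀ = t₀ * sinh t₀) (hs : |s| < t₀) :
    s * sinh s < cosh s :=
  calc s * sinh s = |s| * sinh |s| := by
        rcases abs_cases s with ⟨h, -⟩ | ⟨h, -⟩ <;> simp [h, sinh_neg]
    _ ≤ |s| * sinh t₀ := mul_le_mul_of_nonneg_left (sinh_le_sinh.2 hs.le) (abs_nonneg s)
    _ < cosh |s| := mul_sinh_lt_cosh_of_lt heq hs
    _ = cosh s := cosh_abs s

noncomputable def axialRadius (x : R3) : ℝ := √(x 0 ^ 2 + x 1 ^ 2)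

lemma axialRadius_nonneg (x : R3) : 0 ≤ axialRadius x := sqrt_nonneg _

lemma axialRadius_sq (x : R3) : axialRadius x ^ 2 = x 0 ^ 2 + x 1 ^ 2 :=
  sq_sqrt (by positivity)

lemma norm_sq_eq_axialRadius_sq_add (x : R3) : ‖x‖ ^ 2 = axialRadius x ^ 2 + x 2 ^ 2 := by
  simp [EuclideanSpace.norm_sq_eq, Fin.sum_univ_three, axialRadius_sq, add_assoc]

lemma mem_smul_Cat0_iff {t₀ l : ℝ} (hl : 0 < l) (x : R3) :
    x ∈ l • Cat0 t₀ ↔ l * cosh (x 2 / l) = axialRadius x ∧ |x 2| < l * t₀ := by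
  rw [mem_smul_set_iff_inv_smul_mem₀ hl.ne', axialRadius, eq_comm,
    sqrt_eq_iff_eq_sq (by positivity) (by positivity)]
  simp only [Cat0, mem_ofPred_eq, PiLp.smul_apply, smul_eq_mul, inv_mul_eq_div, abs_div,
    abs_of_pos hl, div_lt_iff₀ hl, mul_comm t₀ l]
  refine and_congr_left fun _ => ?_
  rw [div_pow, div_pow, ← add_div, eq_div_iff (by positivity), mul_pow, eq_comm, mul_comm]

lemma mem_solidCone_iff {t₀ : ℝ} (ht₀ : 0 < t₀) (x : R3) :
    x ∈ solidCone t₀ ↔ |x 2| * cosh t₀ < axialRadius x * t₀ := by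
  have hden : 0 < t₀ ^ 2 + cosh t₀ ^ 2 := by positivity
  rw [← sq_lt_sq₀ (by positivity) (mul_nonneg (axialRadius_nonneg x) ht₀.le), mul_pow, mul_pow,
    sq_abs]
  simp only [solidCone, mem_ofPred_eq, norm_sq_eq_axialRadius_sq_add, ← mul_div_assoc,
    lt_div_iff₀ hden]
  constructor
  · rintro ⟨-, h⟩
    nlinarith
  · intro h
    refine ⟨fun h0 => ?_, by nlinarith⟩
    simp [h0, axialRadius] at h

lemma hasDerivAt_mul_cosh_div (z : ℝ) {l : ℝ} (hl : l ≠ 0) :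
    HasDerivAt (fun l => l * cosh (z / l)) (cosh (z / l) - z / l * sinh (z / l)) l := by
  have h : HasDerivAt (fun l => l * cosh (z / l))
      (1 * cosh (z / l) + l * (sinh (z / l) * ((0 * l - z * 1) / l ^ 2))) l :=
    (hasDerivAt_id l).mul ((hasDerivAt_cosh (z / l)).comp l
      ((hasDerivAt_const l z).div (hasDerivAt_id l) hl))
  refine h.congr_deriv ?_
  field_simp
  ring

lemma strictMonoOn_mul_cosh_div {t₀ : ℝ} (ht₀ : 0 < t₀) (heq : cosh t₀ = t₀ * sinh t₀) (z : ℝ) :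
    StrictMonoOn (fun l => l * cosh (z / l)) (Ioi (|z| / t₀)) := by
  have hpos : ∀ l ∈ Ioi (|z| / t₀), 0 < l := fun l hl =>
    (div_nonneg (abs_nonneg z) ht₀.le).trans_lt hl
  refine strictMonoOn_of_deriv_pos (convex_Ioi _) (fun l hl =>
    (hasDerivAt_mul_cosh_div z (hpos l hl).ne').continuousAt.continuousWithinAt) fun l hl => ?_
  rw [interior_Ioi] at hl
  have hl0 := hpos l hl
  have habs : |z / l| < t₀ := by
    rw [abs_div, abs_of_pos hl0, div_lt_iff₀ hl0, mul_comm]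
    exact (div_lt_iff₀ ht₀).1 hl
  rw [(hasDerivAt_mul_cosh_div z hl0.ne').deriv, sub_pos]
  exact mul_sinh_lt_cosh_of_abs_lt heq habs

lemma exists_mul_cosh_div_eq {t₀ z ρ : ℝ} (ht₀ : 0 < t₀) (h : |z| * cosh t₀ < ρ * t₀) :
    ∃ l, |z| / t₀ < l ∧ l * cosh (z / l) = ρ := by
  have hρ : 0 < ρ := pos_of_mul_pos_left ((by positivity : 0 ≤ |z| * cosh t₀).trans_lt h) ht₀.le
  rcases eq_or_ne z 0 with rfl | hz
  · exact ⟨ρ, by simpa using hρ, by simp⟩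
  set a := |z| / t₀ with ha_def
  have ha : 0 < a := by positivity
  have hat : a * cosh t₀ < ρ := by rwa [div_mul_eq_mul_div, div_lt_iff₀ ht₀]
  have hFa : a * cosh (z / a) = a * cosh t₀ := by
    rw [← cosh_abs, abs_div, abs_of_pos ha, ha_def, div_div_cancel₀ (abs_pos.2 hz).ne']
  have haρ : a ≤ ρ := (le_mul_of_one_le_right ha.le (one_le_cosh t₀)).trans hat.le
  have hcont : ContinuousOn (fun l => l * cosh (z / l)) (Icc a ρ) := fun l hl =>
    (hasDerivAt_mul_cosh_div z (ha.trans_le hl.1).ne').continuousAt.continuousWithinAt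
  obtain ⟨l, hl, hFl⟩ := intermediate_value_Icc haρ hcont
    ⟨hFa.trans_le hat.le, le_mul_of_one_le_right hρ.le (one_le_cosh _)⟩
  refine ⟨l, hl.1.lt_of_ne fun hal => ?_, hFl⟩
  subst hal
  exact hat.ne (hFa.symm.trans hFl)

lemma eq_of_mem_smul_Cat0 {t₀ l m : ℝ} (ht₀ : 0 < t₀) (heq : cosh t₀ = t₀ * sinh t₀) {x : R3}
    (hl : 0 < l) (hm : 0 < m) (hxl : x ∈ l • Cat0 t₀) (hxm : x ∈ m • Cat0 t₀) : l = m := by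
  rw [mem_smul_Cat0_iff hl] at hxl
  rw [mem_smul_Cat0_iff hm] at hxm
  exact (strictMonoOn_mul_cosh_div ht₀ heq (x 2)).injOn ((div_lt_iff₀ ht₀).2 hxl.2)
    ((div_lt_iff₀ ht₀).2 hxm.2) (hxl.1.trans hxm.1.symm)

lemma smul_Cat0_subset_solidCone {t₀ l : ℝ} (ht₀ : 0 < t₀) (heq : cosh t₀ = t₀ * sinh t₀)
    (hl : 0 < l) : l • Cat0 t₀ ⊆ solidCone t₀ := by
  intro x hx
  obtain ⟨hρ, hz⟩ := (mem_smul_Cat0_iff hl x).1 hx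
  have hs : |x 2| / l < t₀ := (div_lt_iff₀ hl).2 (by linarith)
  rw [mem_solidCone_iff ht₀, ← hρ, ← cosh_abs (x 2 / l), abs_div, abs_of_pos hl]
  calc |x 2| * cosh t₀ = l * t₀ * (|x 2| / l * sinh t₀) := by rw [heq]; field_simp
    _ < l * t₀ * cosh (|x 2| / l) := by gcongr; exact mul_sinh_lt_cosh_of_lt heq hs
    _ = l * cosh (|x 2| / l) * t₀ := by ring

lemma exists_mem_smul_Cat0 {t₀ : ℝ} (ht₀ : 0 < t₀) {x : R3} (hx : x ∈ solidCone t₀) :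
    ∃ l : ℝ, 0 < l ∧ x ∈ l • Cat0 t₀ := by
  obtain ⟨l, hzl, hl⟩ := exists_mul_cosh_div_eq ht₀ ((mem_solidCone_iff ht₀ x).1 hx)
  have hl0 : 0 < l := (div_nonneg (abs_nonneg _) ht₀.le).trans_lt hzl
  exact ⟨l, hl0, (mem_smul_Cat0_iff hl0 x).2 ⟨hl, by rwa [div_lt_iff₀ ht₀] at hzl⟩⟩

theorem stmt5 (t₀ : ℝ) (ht₀ : 0 < t₀) (heq : Real.cosh t₀ = t₀ * Real.sinh t₀) :
    (∀ l m : ℝ, 0 < l → 0 < m → l ≠ m → Disjoint (l • Cat0 t₀) (m • Cat0 t₀)) ∧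
    (⋃ l ∈ Ioi (0 : ℝ), l • Cat0 t₀) = solidCone t₀ ∧
    ∃ f : R3 → ℝ, ∀ x ∈ solidCone t₀,
      0 < f x ∧ (f x)⁻¹ • x ∈ Cat0 t₀ ∧ ∀ l : ℝ, 0 < l → f (l • x) = l * f x := by
  refine ⟨fun l m hl hm hne => disjoint_left.2 fun x hxl hxm =>
    hne (eq_of_mem_smul_Cat0 ht₀ heq hl hm hxl hxm), ?_, ?_⟩
  · ext x
    simp only [mem_iUnion, mem_Ioi, exists_prop]
    exact ⟨fun ⟨l, hl, hx⟩ => smul_Cat0_subset_solidCone ht₀ heq hl hx, exists_mem_smul_Cat0 ht₀⟩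
  · choose! f hf_pos hf_mem using fun x (hx : x ∈ solidCone t₀) => exists_mem_smul_Cat0 ht₀ hx
    refine ⟨f, fun x hx => ⟨hf_pos x hx,
      (mem_smul_set_iff_inv_smul_mem₀ (hf_pos x hx).ne' _ _).1 (hf_mem x hx), fun l hl => ?_⟩⟩
    have hscale : 0 < l * f x := mul_pos hl (hf_pos x hx)
    have hlx : l • x ∈ (l * f x) • Cat0 t₀ := by
      rw [mul_smul]
      exact smul_mem_smul_set (hf_mem x hx)
    have hlx_cone := smul_Cat0_subset_solidCone ht₀ heq hscale hlx
    exact eq_of_mem_smul_Cat0 ht₀ heq (hf_pos _ hlx_cone) hscale (hf_mem _ hlx_cone) hlx
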